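/- For integers L ≥ 0 and m ≥ 0: q^m (q; q²)_m · sum over t ≥ 0 of qbinom(L, 2t+1; q) q^{2t² + 2(m+1)t} = S_m(q) T_{L+m}(q) - T_m(q) S_{L+m}(q), where S and T are the Andrews-Santos polynomials. -/
import Mathlib


open Finset

/-- The formal variable `q` in the field of rational functions over `ℚ`. -/
noncomputable def q : RatFunc ℚ := RatFunc.X

/-- Gaussian binomial coefficient `qbinom(N, K)` in the variable `p`;
it is `0` when `K < 0` or `K > N`. -/
noncomputable def qbin (p : RatFunc ℚ) (N K : ℤ) : RatFunc ℚ :=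
  if 0 ≤ K ∧ K ≤ N then
    (∏ j ∈ Finset.range (N - K).toNat, (1 - p ^ (K + 1 + (j : ℤ)))) /
    (∏ j ∈ Finset.range (N - K).toNat, (1 - p ^ ((j : ℤ) + 1)))
  else 0

lemma hq0 : q ≠ 0 := RatFunc.X_ne_zero

lemma hne (k : ℕ) : (1 : RatFunc ℚ) - q ^ (k + 1) ≠ 0 := by
  intro h
  have h1 : q ^ (k+1) = 1 := by linear_combination -h
  have h2 : (Polynomial.X : Polynomial ℚ) ^ (k+1) = 1 := by
    apply RatFunc.algebraMap_injective (K := ℚ) ?_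
    · simpa [map_pow, q, RatFunc.algebraMap_X] using h1
  have := congrArg (Polynomial.eval 0) h2
  simp at this

lemma bden_ne (r : ℕ) : (∏ j ∈ range r, ((1:RatFunc ℚ) - q ^ (j+1))) ≠ 0 :=
  Finset.prod_ne_zero_iff.2 fun j _ => hne j

lemma qbin_nat (N K : ℕ) (h : K ≤ N) :
    qbin q N K = (∏ j ∈ range (N - K), (1 - q ^ (K + 1 + j))) /
      (∏ j ∈ range (N - K), (1 - q ^ (j + 1))) := by
  rw [qbin, if_pos ⟨Int.natCast_nonneg K, by exact_mod_cast h⟩,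
    show ((N:ℤ) - K) = ((N - K : ℕ) : ℤ) by omega, Int.toNat_natCast]
  congr 1

lemma qbin_zero (N K : ℕ) (h : N < K) : qbin q N K = 0 := by
  rw [qbin, if_neg]; push_neg; intro _; exact_mod_cast h

lemma qbin_self (N : ℕ) : qbin q N N = 1 := by
  rw [qbin_nat N N le_rfl]; simp

lemma qbin_zero_right (N : ℕ) : qbin q N 0 = 1 := by
  rw [show ((0:ℤ) = ((0:ℕ):ℤ)) from rfl, qbin_nat N 0 (Nat.zero_le N)]
  rw [div_eq_one_iff_eq (by simpa using bden_ne N)]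
  exact Finset.prod_congr rfl fun j _ => by rw [Nat.zero_add, Nat.add_comm]

lemma pascalN (N K : ℕ) :
    qbin q ((N+1:ℕ):ℤ) ((K+1:ℕ):ℤ)
      = qbin q N ((K+1:ℕ):ℤ) + q ^ (N - K) * qbin q (N:ℤ) (K:ℤ) := by
  rcases lt_trichotomy K N with hlt | heq | hgt
  · obtain ⟨d, rfl⟩ : ∃ d, N = K + d + 1 := ⟨N - K - 1, by omega⟩
    rw [qbin_nat _ _ (by omega), qbin_nat _ _ (by omega), qbin_nat _ _ (by omega),
      show K + d + 1 + 1 - (K + 1) = d + 1 by omega,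
      show K + d + 1 - (K + 1) = d by omega,
      show K + d + 1 - K = d + 1 by omega]
    have hA0 : (∏ j ∈ range (d+1), (1 - q ^ (K + 1 + j)))
        = (1 - q ^ (K+1)) * ∏ j ∈ range d, (1 - q ^ (K + 1 + 1 + j)) := by
      rw [Finset.prod_range_succ']
      rw [mul_comm]
      congr 1
      · exact Finset.prod_congr rfl fun j _ => by rw [show K+1+(j+1) = K+1+1+j by omega]
    rw [hA0, Finset.prod_range_succ, Finset.prod_range_succ]
    have hBd := bden_ne d
    have h1 := hne d
    field_simp
    ring
  · subst heq
    rw [qbin_nat _ _ le_rfl, qbin_zero _ _ (by omega), qbin_self]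
    simp
  · rw [qbin_zero _ _ (by omega), qbin_zero _ _ (by omega), qbin_zero _ _ (by omega),
      Nat.sub_eq_zero_of_le (by omega)]
    ring

lemma pascal_odd (n t : ℕ) :
    qbin q ((n:ℤ)+1) (2*(t:ℤ)+1)
      = qbin q ↑n (2*(t:ℤ)+1) + q ^ (n - 2*t) * qbin q ↑n (2*(t:ℤ)) := by
  have h := pascalN n (2*t); push_cast at h; exact h

lemma pascal_even (n t : ℕ) :
    qbin q ((n+1:ℕ):ℤ) (2*((t+1:ℕ):ℤ))
      = qbin q ↑n (2*((t+1:ℕ):ℤ)) + q ^ (n - (2*t+1)) * qbin q ↑n (2*(t:ℤ)+1) := by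
  have h := pascalN n (2*t+1)
  rw [show ((2*t+1+1:ℕ):ℤ) = 2*((t+1:ℕ):ℤ) by push_cast; ring,
    show ((2*t+1:ℕ):ℤ) = 2*((t:ℕ):ℤ)+1 by push_cast; ring] at h
  exact h

lemma qz_odd {n t : ℕ} (h : n < 2*t+1) : qbin q ↑n (2*(t:ℤ)+1) = 0 := by
  have h2 := qbin_zero n (2*t+1) h; push_cast at h2; exact h2

lemma qz_even {n t : ℕ} (h : n < 2*t) : qbin q ↑n (2*(t:ℤ)) = 0 := by
  have h2 := qbin_zero n (2*t) h; push_cast at h2; exact h2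

lemma qz_even' {n t : ℕ} (h : n < 2*(t+1)) : qbin q ↑n (2*((t+1:ℕ):ℤ)) = 0 := by
  have h2 := qbin_zero n (2*(t+1)) h
  rw [show ((2*(t+1):ℕ):ℤ) = 2*((t+1:ℕ):ℤ) by push_cast; ring] at h2; exact h2

lemma qb_even_zero (N : ℕ) : qbin q ↑N (2*((0:ℕ):ℤ)) = 1 := by
  rw [show (2*((0:ℕ):ℤ)) = 0 by norm_num]; exact qbin_zero_right N

lemma odd_rec (n e : ℕ) (c d : ℕ → ℕ)
    (h : ∀ t, 2*t ≤ n → c t + (n - 2*t) = e + d t) :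
    ∑ t ∈ range (n+1+1), q ^ c t * qbin q (↑(n+1:ℕ)) (2*(t:ℤ)+1)
      = (∑ t ∈ range (n+1), q ^ c t * qbin q ↑n (2*(t:ℤ)+1))
        + q ^ e * ∑ t ∈ range (n+1), q ^ d t * qbin q ↑n (2*(t:ℤ)) := by
  rw [Finset.sum_range_succ]
  rw [qz_odd (n := n+1) (t := n+1) (by omega), mul_zero, add_zero]
  rw [Finset.mul_sum, ← Finset.sum_add_distrib]
  refine Finset.sum_congr rfl fun t ht => ?_
  rw [show ((n+1:ℕ):ℤ) = (n:ℤ)+1 by push_cast; ring, pascal_odd, mul_add]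
  congr 1
  by_cases h2 : 2*t ≤ n
  · rw [← mul_assoc, ← pow_add, h t h2, pow_add, mul_assoc]
  · rw [qz_even (by omega)]; simp

lemma even_rec (n e : ℕ) (c d : ℕ → ℕ)
    (h : ∀ t, 2*t+1 ≤ n → c (t+1) + (n - (2*t+1)) = e + d t) :
    ∑ t ∈ range (n+1+1), q ^ c t * qbin q (↑(n+1:ℕ)) (2*(t:ℤ))
      = (∑ t ∈ range (n+1), q ^ c t * qbin q ↑n (2*(t:ℤ)))
        + q ^ e * ∑ t ∈ range (n+1), q ^ d t * qbin q ↑n (2*(t:ℤ)+1) := by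
  rw [Finset.sum_range_succ' _ (n+1)]
  conv_rhs => rw [Finset.sum_range_succ' _ n]
  rw [qb_even_zero, qb_even_zero]
  have hext : (∑ i ∈ range n, q ^ c (i+1) * qbin q ↑n (2*((i+1:ℕ):ℤ)))
      = ∑ i ∈ range (n+1), q ^ c (i+1) * qbin q ↑n (2*((i+1:ℕ):ℤ)) := by
    rw [Finset.sum_range_succ, qz_even' (by omega), mul_zero, add_zero]
  rw [hext, Finset.mul_sum, add_right_comm, ← Finset.sum_add_distrib]
  congr 1
  refine Finset.sum_congr rfl fun i hi => ?_
  rw [pascal_even, mul_add]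
  congr 1
  by_cases h2 : 2*i+1 ≤ n
  · rw [← mul_assoc, ← pow_add, h i h2, pow_add, mul_assoc]
  · rw [qz_odd (by omega)]; simp


/-- Andrews–Santos polynomial `S_n(q) = Σ_{t≥0} q^{2t²} qbinom(n, 2t)`. -/
noncomputable def Sas (n : ℕ) : RatFunc ℚ :=
  ∑ t ∈ Finset.range (n + 1), q ^ (2 * t ^ 2) * qbin q n (2 * t)

/-- Andrews–Santos polynomial `T_n(q) = Σ_{t≥0} q^{2t²+2t} qbinom(n, 2t+1)`. -/
noncomputable def Tas (n : ℕ) : RatFunc ℚ :=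
  ∑ t ∈ Finset.range (n + 1), q ^ (2 * t ^ 2 + 2 * t) * qbin q n (2 * t + 1)

lemma Trec (n : ℕ) : Tas (n+1) = Tas n + q ^ n * Sas n := by
  unfold Tas Sas
  rw [odd_rec n n (fun t => 2*t^2+2*t) (fun t => 2*t^2) (fun t h2 => by zify [h2]; ring)]

lemma Srec (n : ℕ) : Sas (n+1) = Sas n + q ^ (n+1) * Tas n := by
  unfold Sas Tas
  rw [even_rec n (n+1) (fun t => 2*t^2) (fun t => 2*t^2+2*t) (fun t h2 => by zify [h2]; ring)]

lemma STsq (m : ℕ) : Sas m ^ 2 - q * Tas m ^ 2 = ∏ j ∈ range m, (1 - q ^ (2*j+1)) := by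
  induction m with
  | zero => norm_num [Sas, Tas, qbin]
  | succ n ih => rw [Srec, Trec, Finset.prod_range_succ, ← ih]; ring

noncomputable def Fs (m L : ℕ) : RatFunc ℚ :=
  ∑ t ∈ Finset.range (L + 1), qbin q L (2 * t + 1) * q ^ (2 * t ^ 2 + 2 * (m + 1) * t)

noncomputable def Gs (m L : ℕ) : RatFunc ℚ :=
  ∑ t ∈ Finset.range (L + 1), qbin q L (2 * t) * q ^ (2 * t ^ 2 + 2 * m * t)

lemma Frec (m L : ℕ) : Fs m (L+1) = Fs m L + q ^ L * Gs m L := by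
  unfold Fs Gs
  simp_rw [mul_comm (qbin q _ _)]
  rw [odd_rec L L (fun t => 2*t^2+2*(m+1)*t) (fun t => 2*t^2+2*m*t) (fun t h2 => by zify [h2]; ring)]

lemma Grec (m L : ℕ) : Gs m (L+1) = Gs m L + q ^ (L + 2*m + 1) * Fs m L := by
  unfold Fs Gs
  simp_rw [mul_comm (qbin q _ _)]
  rw [even_rec L (L+2*m+1) (fun t => 2*t^2+2*m*t) (fun t => 2*t^2+2*(m+1)*t) (fun t h2 => by zify [h2]; ring)]

lemma key (m L : ℕ) :
    q ^ m * (∏ j ∈ range m, (1 - q ^ (2*j+1))) * Fs m L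
        = Sas m * Tas (L+m) - Tas m * Sas (L+m)
    ∧ (∏ j ∈ range m, (1 - q ^ (2*j+1))) * Gs m L
        = Sas m * Sas (L+m) - q * Tas m * Tas (L+m) := by
  induction L with
  | zero =>
    have hF : Fs m 0 = 0 := by
      rw [Fs, Finset.sum_range_one, qz_odd (by omega), zero_mul]
    have hG : Gs m 0 = 1 := by
      rw [Gs, Finset.sum_range_one, qb_even_zero]; norm_num
    rw [hF, hG, Nat.zero_add]
    exact ⟨by ring, by rw [mul_one, ← STsq]; ring⟩
  | succ n ih =>
    obtain ⟨ih1, ih2⟩ := ih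
    constructor
    · rw [Frec, show n+1+m = (n+m)+1 by omega, Trec, Srec]
      linear_combination ih1 + q^(n+m) * ih2
    · rw [Grec, show n+1+m = (n+m)+1 by omega, Trec, Srec]
      linear_combination ih2 + q^(n+m+1) * ih1


/-- For integers `L, m ≥ 0`:
`q^m (q; q²)_m Σ_{t≥0} qbinom(L, 2t+1) q^{2t²+2(m+1)t} = S_m(q) T_{L+m}(q) - T_m(q) S_{L+m}(q)`. -/
theorem stmt19 (L m : ℕ) :
    q ^ m * (∏ j ∈ Finset.range m, (1 - q ^ (2 * j + 1))) *
      ∑ t ∈ Finset.range (L + 1), qbin q L (2 * t + 1) * q ^ (2 * t ^ 2 + 2 * (m + 1) * t)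
    = Sas m * Tas (L + m) - Tas m * Sas (L + m) := by
  simpa [Fs] using (key m L).1
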